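/- arXiv:1806.03814 — 4 statements merged into one kernel-verified Lean document; each statement's English description precedes it below -/
import Mathlib

section
/- Path monotonicity of evacuation time: let V' be a subtree, u ∈ V', and x ∉ V' a neighbor of u in the tree. Then Θ(V' ∪ {x}, x : s) ≥ Θ(V', u : s) for every scenario s. -/
open scoped Classical
open Finset

/-- Reachability inside a vertex set: a walk whose support stays in `S`. -/
def ReachIn {V : Type*} (G : SimpleGraph V) (S : Set V) (u w : V) : Prop :=
  ∃ p : G.Walk u w, ∀ z ∈ p.support, z ∈ S

/-- `V'` induces a (nonempty, connected) subtree of the tree `G`. -/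
def IsSubtree {V : Type*} (G : SimpleGraph V) (V' : Finset V) : Prop :=
  V'.Nonempty ∧ ∀ u ∈ V', ∀ w ∈ V', ReachIn G (↑V') u w

/-- The branch of `V'` falling off of `x` that contains `v`:
the connected component of `v` in the induced graph on `V' \ {x}`. -/
noncomputable def branchOf {V : Type*} [DecidableEq V] (G : SimpleGraph V)
    (V' : Finset V) (x v : V) : Finset V :=
  (V'.erase x).filter (fun w => ReachIn G (↑(V'.erase x)) v w)

/-- `W(V',x,v':s)`: total weight of vertices of `V'` at distance at least `d(v',x)` from `x`. -/
noncomputable def Wgt {V : Type*} (d : V → V → ℝ) (V' : Finset V) (x v' : V)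
    (s : V → ℝ) : ℝ :=
  ∑ v ∈ V'.filter (fun v => d v' x ≤ d v x), s v

/-- `D(V',x,v') = {v ∈ V' : d(v,x) ≥ d(v',x)}`. -/
noncomputable def Dset {V : Type*} (d : V → V → ℝ) (V' : Finset V) (x v' : V) : Finset V :=
  V'.filter (fun v => d v' x ≤ d v x)

/-- Evacuation time `Θ(B ∪ {x}, x : s)` of a branch `B` (not containing `x`) to the sink
`x`, given by the formula `max_{v' ∈ B : W(B,x,v':s) > 0} (d(v',x) + W(B,x,v':s)/c)`. -/
noncomputable def ThetaB {V : Type*} (d : V → V → ℝ) (c : ℝ) (B : Finset V) (x : V)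
    (s : V → ℝ) : ℝ :=
  (B.filter (fun v' => 0 < Wgt d B x v' s)).fold max 0
    (fun v' => d v' x + Wgt d B x v' s / c)

/-- Evacuation time `Θ(V', x : s)` of a subtree `V'` (with `x ∈ V'`) to the sink `x`:
the maximum over the branches of `V'` falling off of `x` of the branch evacuation time. -/
noncomputable def Theta {V : Type*} [DecidableEq V] (G : SimpleGraph V) (d : V → V → ℝ)
    (c : ℝ) (V' : Finset V) (x : V) (s : V → ℝ) : ℝ :=
  (V'.erase x).fold max 0 (fun v => ThetaB d c (branchOf G V' x v) x s)

/-- `P ∈ Λ[X]`: `P` is a partition of the vertices into `k` subtrees,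
the `i`-th of which contains the sink `X i` (and no other sink). -/
def ValidPartition {V : Type*} (G : SimpleGraph V) {k : ℕ}
    (P : Fin k → Finset V) (X : Fin k → V) : Prop :=
  (∀ i, X i ∈ P i) ∧ (∀ i, IsSubtree G (P i)) ∧ (∀ v : V, ∃! i, v ∈ P i)

/-- `Θ(P,X:s) = max_i Θ(P_i, x_i : s)`. -/
noncomputable def ThetaPart {V : Type*} [DecidableEq V] (G : SimpleGraph V)
    (d : V → V → ℝ) (c : ℝ) {k : ℕ} (P : Fin k → Finset V) (X : Fin k → V)
    (s : V → ℝ) : ℝ :=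
  (Finset.univ : Finset (Fin k)).fold max 0 (fun i => Theta G d c (P i) (X i) s)

/-- `Θ_OPT(s)`: the optimal `k`-sink evacuation time under scenario `s`. -/
noncomputable def ThetaOpt {V : Type*} [DecidableEq V] (G : SimpleGraph V)
    (d : V → V → ℝ) (c : ℝ) (k : ℕ) (s : V → ℝ) : ℝ :=
  sInf {t | ∃ (P : Fin k → Finset V) (X : Fin k → V),
    ValidPartition G P X ∧ t = ThetaPart G d c P X s}

/-- `s ∈ S = Π_v [w_v^-, w_v^+]`. -/
def InScenarios {V : Type*} (wm wp : V → ℝ) (s : V → ℝ) : Prop :=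
  ∀ v, wm v ≤ s v ∧ s v ≤ wp v

/-- `R_max(P,X) = max_{s ∈ S} (Θ(P,X:s) − Θ_OPT(s))`. -/
noncomputable def Rmax {V : Type*} [DecidableEq V] (G : SimpleGraph V)
    (d : V → V → ℝ) (c : ℝ) (wm wp : V → ℝ) {k : ℕ}
    (P : Fin k → Finset V) (X : Fin k → V) : ℝ :=
  sSup {r | ∃ s : V → ℝ, InScenarios wm wp s ∧
    r = ThetaPart G d c P X s - ThetaOpt G d c k s}

/-- The extreme scenario `s*(U)`: weight `w_v^+` on `U`, `w_v^-` elsewhere. -/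
def sStar {V : Type*} [DecidableEq V] (wm wp : V → ℝ) (U : Finset V) : V → ℝ :=
  fun v => if v ∈ U then wp v else wm v

/-- The candidate worst-case scenario set `S*(V',x)`:
`s*(∅)` together with `s*(D(V_j,x,v'))` for every branch `V_j` of `V'` off `x`
and every `v' ∈ V_j`. -/
noncomputable def SStarSet {V : Type*} [DecidableEq V] (G : SimpleGraph V)
    (d : V → V → ℝ) (wm wp : V → ℝ) (V' : Finset V) (x : V) : Set (V → ℝ) :=
  insert (sStar wm wp ∅)
    {f | ∃ v' ∈ V'.erase x, f = sStar wm wp (Dset d (branchOf G V' x v') x v')}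

/-- The relative max-regret `r(V',x) = max_{s ∈ S*(V',x)} (Θ(V',x:s) − Θ_OPT(s))`. -/
noncomputable def rloc {V : Type*} [DecidableEq V] (G : SimpleGraph V)
    (d : V → V → ℝ) (c : ℝ) (k : ℕ) (wm wp : V → ℝ) (V' : Finset V) (x : V) : ℝ :=
  sSup {t | ∃ s ∈ SStarSet G d wm wp V' x, t = Theta G d c V' x s - ThetaOpt G d c k s}

/-- Replace a scenario by `wm` outside of the set `B`. -/
def restrictTo {V : Type*} [DecidableEq V] (B : Finset V) (s wm : V → ℝ) : V → ℝ :=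
  fun v => if v ∈ B then s v else wm v

/-- Evacuation time of `V_u` to the point on edge `(u,v)` at distance `p` beyond `u`. -/
noncomputable def ThetaE {V : Type*} (d : V → V → ℝ) (c : ℝ) (Vu : Finset V) (u : V)
    (s : V → ℝ) (p : ℝ) : ℝ :=
  (Vu.filter (fun v' => 0 < Wgt d Vu u v' s)).fold max 0
    (fun v' => d v' u + p + Wgt d Vu u v' s / c)

/-- path monotonicity.  If `u ∈ V'` and `x ∉ V'` is a neighbor of `u` in
the tree (so that `d(v,x) = d(v,u) + d(u,x)` for all `v ∈ V'`), then
`Θ(V' ∪ {x}, x : s) ≥ Θ(V', u : s)`. -/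
theorem theta_path_monotone {V : Type*} [Fintype V] [DecidableEq V]
    (G : SimpleGraph V) (hG : G.IsTree) (d : V → V → ℝ) (c : ℝ) (hc : 0 < c)
    (V' : Finset V) (hsub : IsSubtree G V') (u : V) (hu : u ∈ V')
    (x : V) (hx : x ∉ V') (hadj : G.Adj u x)
    (hd : ∀ v ∈ V', d v x = d v u + d u x) (hux : 0 < d u x)
    (s : V → ℝ) (hpos : ∀ v, 0 ≤ s v) :
    Theta G d c V' u s ≤ Theta G d c (insert x V') x s := by

  classical
  set T := ThetaB d c V' x s with hT
  have hTnn : (0:ℝ) ≤ T := by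
    rw [hT]; exact (Finset.le_fold_max _).mpr (Or.inl le_rfl)
  have hW : ∀ (B : Finset V), B ⊆ V' → ∀ v' ∈ V',
      Wgt d B u v' s ≤ Wgt d V' x v' s := by
    intro B hB v' hv'
    unfold Wgt
    apply Finset.sum_le_sum_of_subset_of_nonneg
    · intro v hv
      simp only [Finset.mem_filter] at hv ⊢
      refine ⟨hB hv.1, ?_⟩
      rw [hd v (hB hv.1), hd v' hv']
      linarith [hv.2]
    · intro v _ _; exact hpos v
  have hBr : ∀ (B : Finset V), B ⊆ V' → ThetaB d c B u s ≤ T := by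
    intro B hB
    show (B.filter (fun v' => 0 < Wgt d B u v' s)).fold max 0
      (fun v' => d v' u + Wgt d B u v' s / c) ≤ T
    rw [Finset.fold_max_le]
    refine ⟨hTnn, ?_⟩
    intro v' hv'
    rw [Finset.mem_filter] at hv'
    have hv'V : v' ∈ V' := hB hv'.1
    have hWle := hW B hB v' hv'V
    have hWpos : 0 < Wgt d V' x v' s := lt_of_lt_of_le hv'.2 hWle
    rw [hT]
    show _ ≤ (V'.filter (fun w => 0 < Wgt d V' x w s)).fold max 0
      (fun w => d w x + Wgt d V' x w s / c)
    apply (Finset.le_fold_max _).mpr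
    right
    refine ⟨v', Finset.mem_filter.mpr ⟨hv'V, hWpos⟩, ?_⟩
    have hdiv : Wgt d B u v' s / c ≤ Wgt d V' x v' s / c := by gcongr
    have := hd v' hv'V
    linarith
  have hRHS : T ≤ Theta G d c (insert x V') x s := by
    have hbr : branchOf G (insert x V') x u = V' := by
      unfold branchOf
      rw [Finset.erase_insert hx]
      apply Finset.filter_true_of_mem
      intro w hw
      exact hsub.2 u hu w hw
    show T ≤ ((insert x V').erase x).fold max 0
      (fun v => ThetaB d c (branchOf G (insert x V') x v) x s)
    rw [Finset.erase_insert hx]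
    apply (Finset.le_fold_max _).mpr
    right
    exact ⟨u, hu, by rw [hbr]⟩
  refine le_trans ?_ hRHS
  show (V'.erase u).fold max 0 (fun v => ThetaB d c (branchOf G V' u v) u s) ≤ T
  rw [Finset.fold_max_le]
  refine ⟨hTnn, ?_⟩
  intro v hv
  apply hBr
  exact (Finset.filter_subset _ _).trans (Finset.erase_subset _ _)
end

section
/- Set monotonicity of evacuation time: if x ∈ V'_1 ⊆ V'_2 where both V'_1 and V'_2 induce subtrees of T, then Θ(V'_1, x : s) ≤ Θ(V'_2, x : s) for every scenario s. -/
open scoped Classical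
open Finset

lemma wgt_mono {V : Type*} (d : V → V → ℝ) {B1 B2 : Finset V} (h : B1 ⊆ B2)
    (x v' : V) (s : V → ℝ) (hpos : ∀ v, 0 ≤ s v) :
    Wgt d B1 x v' s ≤ Wgt d B2 x v' s := by
  classical
  apply Finset.sum_le_sum_of_subset_of_nonneg
  · exact Finset.filter_subset_filter _ h
  · intro i _ _; exact hpos i

lemma thetaB_mono {V : Type*} (d : V → V → ℝ) (c : ℝ) (hc : 0 < c)
    {B1 B2 : Finset V} (h : B1 ⊆ B2) (x : V) (s : V → ℝ) (hpos : ∀ v, 0 ≤ s v) :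
    ThetaB d c B1 x s ≤ ThetaB d c B2 x s := by
  classical
  rw [ThetaB, Finset.fold_max_le]
  constructor
  · rw [ThetaB, Finset.le_fold_max]; left; rfl
  · intro v' hv'
    rw [Finset.mem_filter] at hv'
    obtain ⟨hmem, hw⟩ := hv'
    have hw2 : 0 < Wgt d B2 x v' s := lt_of_lt_of_le hw (wgt_mono d h x v' s hpos)
    rw [ThetaB, Finset.le_fold_max]
    right
    exact ⟨v', Finset.mem_filter.mpr ⟨h hmem, hw2⟩,
      by gcongr; exact wgt_mono d h x v' s hpos⟩

lemma branchOf_mono {V : Type*} [DecidableEq V] (G : SimpleGraph V)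
    {V1 V2 : Finset V} (h : V1 ⊆ V2) (x v : V) :
    branchOf G V1 x v ⊆ branchOf G V2 x v := by
  intro w hw
  rw [branchOf, Finset.mem_filter] at hw ⊢
  obtain ⟨hw1, p, hp⟩ := hw
  have he : V1.erase x ⊆ V2.erase x := Finset.erase_subset_erase x h
  exact ⟨he hw1, p, fun z hz => he (hp z hz)⟩

/-- set monotonicity.  If `x ∈ V'_1 ⊆ V'_2` and both sets induce
subtrees, then `Θ(V'_1, x : s) ≤ Θ(V'_2, x : s)`. -/
theorem theta_set_monotone {V : Type*} [Fintype V] [DecidableEq V]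
    (G : SimpleGraph V) (hG : G.IsTree) (d : V → V → ℝ) (c : ℝ) (hc : 0 < c)
    (V1 V2 : Finset V) (h1 : IsSubtree G V1) (h2 : IsSubtree G V2)
    (x : V) (hx : x ∈ V1) (hss : V1 ⊆ V2)
    (s : V → ℝ) (hpos : ∀ v, 0 ≤ s v) :
    Theta G d c V1 x s ≤ Theta G d c V2 x s := by
  rw [Theta, Finset.fold_max_le]
  constructor
  · rw [Theta, Finset.le_fold_max]; left; rfl
  · intro v hv
    calc ThetaB d c (branchOf G V1 x v) x s
        ≤ ThetaB d c (branchOf G V2 x v) x s :=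
          thetaB_mono d c hc (branchOf_mono G hss x v) x s hpos
      _ ≤ Theta G d c V2 x s := by
          rw [Theta, Finset.le_fold_max]
          exact Or.inr ⟨v, Finset.erase_subset_erase x hss hv, le_refl _⟩
end

section
/- (Step (a) of worst-case-scenario reduction.) Let s be a worst case scenario for (P,X), P_i a dominant subtree, and V_j a dominant branch of P_i falling off of x_i under s. Define s' by setting w_v(s') = w_v^- for all v ∉ V_j and w_v(s') = w_v(s) for v ∈ V_j. Then s' is also a worst case scenario for (P,X), P_i remains a dominant subtree under s', and V_j remains a dominant branch of P_i under s'. -/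
open scoped Classical
open Finset

section Aux

lemma fold_max_nonneg {α : Type*} (t : Finset α) (f : α → ℝ) :
    0 ≤ t.fold max 0 f := by
  rw [Finset.le_fold_max]; exact Or.inl le_rfl

lemma le_fold_max_of_mem {α : Type*} {t : Finset α} {f : α → ℝ} {a : α} (h : a ∈ t) :
    f a ≤ t.fold max 0 f := by
  rw [Finset.le_fold_max]; exact Or.inr ⟨a, h, le_rfl⟩

lemma fold_max_le_of {α : Type*} {t : Finset α} {f : α → ℝ} {M : ℝ} (h0 : 0 ≤ M)
    (h : ∀ a ∈ t, f a ≤ M) : t.fold max 0 f ≤ M := by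
  rw [Finset.fold_max_le]; exact ⟨h0, h⟩

lemma Wgt_mono {V : Type*} (d : V → V → ℝ) (V' : Finset V) (x v' : V) {s1 s2 : V → ℝ}
    (h : ∀ v, s1 v ≤ s2 v) : Wgt d V' x v' s1 ≤ Wgt d V' x v' s2 :=
  Finset.sum_le_sum (fun v _ => h v)

lemma Wgt_congr {V : Type*} (d : V → V → ℝ) (V' : Finset V) (x v' : V) {s1 s2 : V → ℝ}
    (h : ∀ v ∈ V', s1 v = s2 v) : Wgt d V' x v' s1 = Wgt d V' x v' s2 :=
  Finset.sum_congr rfl (fun v hv => h v (Finset.mem_filter.1 hv).1)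

lemma ThetaB_mono {V : Type*} (d : V → V → ℝ) {c : ℝ} (hc : 0 < c) (B : Finset V)
    (x : V) {s1 s2 : V → ℝ} (h : ∀ v, s1 v ≤ s2 v) :
    ThetaB d c B x s1 ≤ ThetaB d c B x s2 := by
  apply fold_max_le_of (fold_max_nonneg _ _)
  intro v' hv'
  rw [Finset.mem_filter] at hv'
  have hW : Wgt d B x v' s1 ≤ Wgt d B x v' s2 := Wgt_mono d B x v' h
  have hmem : v' ∈ B.filter (fun v' => 0 < Wgt d B x v' s2) :=
    Finset.mem_filter.2 ⟨hv'.1, lt_of_lt_of_le hv'.2 hW⟩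
  calc d v' x + Wgt d B x v' s1 / c ≤ d v' x + Wgt d B x v' s2 / c := by
        gcongr
    _ ≤ _ := le_fold_max_of_mem (f := fun v' => d v' x + Wgt d B x v' s2 / c) hmem

lemma ThetaB_congr {V : Type*} (d : V → V → ℝ) (c : ℝ) (B : Finset V)
    (x : V) {s1 s2 : V → ℝ} (h : ∀ v ∈ B, s1 v = s2 v) :
    ThetaB d c B x s1 = ThetaB d c B x s2 := by
  unfold ThetaB
  have hW : ∀ v' ∈ B, Wgt d B x v' s1 = Wgt d B x v' s2 :=
    fun v' _ => Wgt_congr d B x v' h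
  rw [Finset.filter_congr (fun v' hv' => by rw [hW v' hv'])]
  exact Finset.fold_congr (fun v' hv' => by
    rw [hW v' (Finset.mem_filter.1 hv').1])

lemma Theta_mono {V : Type*} [DecidableEq V] (G : SimpleGraph V) (d : V → V → ℝ)
    {c : ℝ} (hc : 0 < c) (V' : Finset V) (x : V) {s1 s2 : V → ℝ}
    (h : ∀ v, s1 v ≤ s2 v) : Theta G d c V' x s1 ≤ Theta G d c V' x s2 := by
  apply fold_max_le_of (fold_max_nonneg _ _)
  intro v hv
  exact le_trans (ThetaB_mono d hc _ x h) (le_fold_max_of_mem (f := fun v => ThetaB d c (branchOf G V' x v) x s2) hv)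

lemma ThetaPart_mono {V : Type*} [DecidableEq V] (G : SimpleGraph V) (d : V → V → ℝ)
    {c : ℝ} (hc : 0 < c) {k : ℕ} (P : Fin k → Finset V) (X : Fin k → V)
    {s1 s2 : V → ℝ} (h : ∀ v, s1 v ≤ s2 v) :
    ThetaPart G d c P X s1 ≤ ThetaPart G d c P X s2 := by
  apply fold_max_le_of (fold_max_nonneg _ _)
  intro j hj
  exact le_trans (Theta_mono G d hc _ _ h) (le_fold_max_of_mem (f := fun i => Theta G d c (P i) (X i) s2) hj)

lemma ThetaPart_nonneg {V : Type*} [DecidableEq V] (G : SimpleGraph V) (d : V → V → ℝ)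
    (c : ℝ) {k : ℕ} (P : Fin k → Finset V) (X : Fin k → V) (s : V → ℝ) :
    0 ≤ ThetaPart G d c P X s := fold_max_nonneg _ _

lemma ThetaOpt_nonneg {V : Type*} [DecidableEq V] (G : SimpleGraph V) (d : V → V → ℝ)
    (c : ℝ) (k : ℕ) (s : V → ℝ) : 0 ≤ ThetaOpt G d c k s := by
  apply Real.sInf_nonneg
  rintro t ⟨Q, Y, _, rfl⟩
  exact ThetaPart_nonneg G d c Q Y _

lemma ThetaOpt_mono {V : Type*} [DecidableEq V] (G : SimpleGraph V) (d : V → V → ℝ)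
    {c : ℝ} (hc : 0 < c) {k : ℕ} (Q : Fin k → Finset V) (Y : Fin k → V)
    (hval : ValidPartition G Q Y) {s1 s2 : V → ℝ} (h : ∀ v, s1 v ≤ s2 v) :
    ThetaOpt G d c k s1 ≤ ThetaOpt G d c k s2 := by
  refine le_csInf ⟨ThetaPart G d c Q Y s2, ⟨Q, Y, hval, rfl⟩⟩ ?_
  rintro t ⟨Q', Y', hval', rfl⟩
  refine le_trans (csInf_le ?_ ⟨Q', Y', hval', rfl⟩) (ThetaPart_mono G d hc Q' Y' h)
  exact ⟨0, by rintro t ⟨Q'', Y'', _, rfl⟩; exact ThetaPart_nonneg G d c Q'' Y'' _⟩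

/-- A uniform bound on `ThetaPart` over scenarios in `S`. -/
lemma ThetaPart_bound {V : Type*} [Fintype V] [DecidableEq V] (G : SimpleGraph V)
    (d : V → V → ℝ) {c : ℝ} (hc : 0 < c) (wm wp : V → ℝ)
    (hw : ∀ v, 0 ≤ wm v ∧ wm v ≤ wp v) {k : ℕ} (P : Fin k → Finset V) (X : Fin k → V)
    {s : V → ℝ} (hs : InScenarios wm wp s) :
    ThetaPart G d c P X s ≤
      max 0 ((Finset.univ ×ˢ Finset.univ : Finset (V × V)).fold max 0
          (fun p => d p.1 p.2) + (∑ v, wp v) / c) := by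
  set M := max 0 ((Finset.univ ×ˢ Finset.univ : Finset (V × V)).fold max 0
      (fun p => d p.1 p.2) + (∑ v, wp v) / c) with hM
  apply fold_max_le_of (le_max_left _ _)
  intro j _
  apply fold_max_le_of (le_max_left _ _)
  intro v _
  apply fold_max_le_of (le_max_left _ _)
  intro v' _
  refine le_trans ?_ (le_max_right _ _)
  have hd : d v' (X j) ≤ (Finset.univ ×ˢ Finset.univ : Finset (V × V)).fold max 0
      (fun p => d p.1 p.2) :=
    le_fold_max_of_mem (f := fun p : V × V => d p.1 p.2) (a := (v', X j)) (Finset.mem_product.2 ⟨Finset.mem_univ _, Finset.mem_univ _⟩)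
  have hWle : Wgt d (branchOf G (P j) (X j) v) (X j) v' s ≤ ∑ v, wp v := by
    refine le_trans (Finset.sum_le_sum (fun u _ => (hs u).2)) ?_
    exact Finset.sum_le_sum_of_subset_of_nonneg (Finset.subset_univ _)
      (fun u _ _ => le_trans (hw u).1 (hw u).2)
  have hdiv : Wgt d (branchOf G (P j) (X j) v) (X j) v' s / c ≤ (∑ v, wp v) / c :=
    (div_le_div_iff_of_pos_right hc).2 hWle
  gcongr

end Aux

/-- step (a) of the worst-case-scenario reduction: lowering all weights
outside the dominant branch `V_j` to their lower endpoints preserves being a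
worst case scenario, with `P_i` still a dominant subtree and `V_j` still a dominant
branch of `P_i` falling off of `x_i`. -/
theorem worst_case_reduce_outside {V : Type*} [Fintype V] [DecidableEq V]
    (G : SimpleGraph V) (hG : G.IsTree) (d : V → V → ℝ) (c : ℝ) (hc : 0 < c)
    (wm wp : V → ℝ) (hw : ∀ v, 0 ≤ wm v ∧ wm v ≤ wp v)
    {k : ℕ} (P : Fin k → Finset V) (X : Fin k → V) (hval : ValidPartition G P X)
    (s : V → ℝ) (hs : InScenarios wm wp s)
    (hwc : ThetaPart G d c P X s - ThetaOpt G d c k s = Rmax G d c wm wp P X)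
    (i : Fin k)
    (hdom : ThetaPart G d c P X s = Theta G d c (P i) (X i) s)
    (b : V) (hb : b ∈ (P i).erase (X i))
    (hdb : Theta G d c (P i) (X i) s = ThetaB d c (branchOf G (P i) (X i) b) (X i) s) :
    InScenarios wm wp (restrictTo (branchOf G (P i) (X i) b) s wm) ∧
    ThetaPart G d c P X (restrictTo (branchOf G (P i) (X i) b) s wm) -
        ThetaOpt G d c k (restrictTo (branchOf G (P i) (X i) b) s wm) =
      Rmax G d c wm wp P X ∧
    ThetaPart G d c P X (restrictTo (branchOf G (P i) (X i) b) s wm) =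
      Theta G d c (P i) (X i) (restrictTo (branchOf G (P i) (X i) b) s wm) ∧
    Theta G d c (P i) (X i) (restrictTo (branchOf G (P i) (X i) b) s wm) =
      ThetaB d c (branchOf G (P i) (X i) b) (X i)
        (restrictTo (branchOf G (P i) (X i) b) s wm) := by
  set B := branchOf G (P i) (X i) b with hB
  set s' := restrictTo B s wm with hs'def
  -- s' is a scenario
  have hvB : ∀ v ∈ B, s' v = s v := by
    intro v hv; simp only [hs'def, restrictTo, if_pos hv]
  have hvN : ∀ v, v ∉ B → s' v = wm v := by
    intro v hv; simp only [hs'def, restrictTo, if_neg hv]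
  have h1 : InScenarios wm wp s' := by
    intro v
    by_cases hv : v ∈ B
    · rw [hvB v hv]; exact hs v
    · rw [hvN v hv]; exact ⟨le_rfl, (hw v).2⟩
  -- s' ≤ s pointwise
  have h2 : ∀ v, s' v ≤ s v := by
    intro v
    by_cases hv : v ∈ B
    · rw [hvB v hv]
    · rw [hvN v hv]; exact (hs v).1
  -- ThetaB on B is unchanged
  have h3 : ThetaB d c B (X i) s' = ThetaB d c B (X i) s :=
    ThetaB_congr d c B (X i) hvB
  -- lower bounds on ThetaPart s'
  have h4 : ThetaB d c B (X i) s' ≤ Theta G d c (P i) (X i) s' := by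
    rw [hB]
    exact le_fold_max_of_mem
      (f := fun v => ThetaB d c (branchOf G (P i) (X i) v) (X i) s') hb
  have h5 : Theta G d c (P i) (X i) s' ≤ ThetaPart G d c P X s' :=
    le_fold_max_of_mem (f := fun j => Theta G d c (P j) (X j) s')
      (Finset.mem_univ i)
  have h6 : ThetaPart G d c P X s' ≤ ThetaPart G d c P X s :=
    ThetaPart_mono G d hc P X h2
  -- the chain of (in)equalities collapses
  have hchain : ThetaPart G d c P X s ≤ ThetaB d c B (X i) s' := by
    rw [h3, ← hdb, ← hdom]
  have keyPart : ThetaPart G d c P X s' = ThetaPart G d c P X s :=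
    le_antisymm h6 (le_trans hchain (le_trans h4 h5))
  have key3 : ThetaPart G d c P X s' = Theta G d c (P i) (X i) s' :=
    le_antisymm (by rw [keyPart]; exact le_trans hchain h4) h5
  have key4 : Theta G d c (P i) (X i) s' = ThetaB d c B (X i) s' :=
    le_antisymm (le_trans h5 (by rw [keyPart]; exact hchain)) h4
  -- ThetaOpt decreases
  have h7 : ThetaOpt G d c k s' ≤ ThetaOpt G d c k s :=
    ThetaOpt_mono G d hc P X hval h2
  -- regret of s' reaches Rmax
  have hge : Rmax G d c wm wp P X ≤
      ThetaPart G d c P X s' - ThetaOpt G d c k s' := by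
    rw [← hwc, keyPart]
    linarith
  have hbdd : BddAbove {r | ∃ t : V → ℝ, InScenarios wm wp t ∧
      r = ThetaPart G d c P X t - ThetaOpt G d c k t} := by
    refine ⟨max 0 ((Finset.univ ×ˢ Finset.univ : Finset (V × V)).fold max 0
        (fun p => d p.1 p.2) + (∑ v, wp v) / c), ?_⟩
    rintro r ⟨t, ht, rfl⟩
    have := ThetaPart_bound G d hc wm wp hw P X ht
    have := ThetaOpt_nonneg G d c k t
    linarith
  have hle : ThetaPart G d c P X s' - ThetaOpt G d c k s' ≤
      Rmax G d c wm wp P X :=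
    le_csSup hbdd ⟨s', h1, rfl⟩
  exact ⟨h1, le_antisymm hle hge, key3, key4⟩
end

section
/- (Decreasing closer vertices preserves evacuation time of the dominant branch.) Let V_j be a branch with sink x_i and let v̄ ∈ V_j achieve the maximum Θ(V_j∪{x_i},x_i:s') = d(v̄,x_i) + W(V_j,x_i,v̄:s')/c. If v'' ∈ V_j satisfies d(v'',x_i) < d(v̄,x_i), then lowering w_{v''} to w_{v''}^- (yielding scenario s'') leaves the evacuation time unchanged: Θ(V_j∪{x_i},x_i:s'') = Θ(V_j∪{x_i},x_i:s'). -/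
open scoped Classical
open Finset

/-- if `v̄ ∈ V_j` achieves the maximum in the evacuation-time formula and
`v'' ∈ V_j` is strictly closer to the sink than `v̄`, then lowering the weight of `v''`
to its lower endpoint `w_{v''}^-` leaves the branch evacuation time unchanged. -/
theorem lower_closer_vertex_preserves_theta {V : Type*} [Fintype V] [DecidableEq V]
    (d : V → V → ℝ) (c : ℝ) (hc : 0 < c)
    (Vj : Finset V) (x : V) (s' : V → ℝ) (hpos : ∀ v, 0 ≤ s' v)
    (wm : V → ℝ) (hwm : ∀ v, 0 ≤ wm v)
    (vb : V) (hvb : vb ∈ Vj)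
    (hWpos : 0 < Wgt d Vj x vb s')
    (hmax : ThetaB d c Vj x s' = d vb x + Wgt d Vj x vb s' / c)
    (v'' : V) (hv'' : v'' ∈ Vj) (hclose : d v'' x < d vb x)
    (hlow : wm v'' ≤ s' v'') :
    ThetaB d c Vj x (Function.update s' v'' (wm v'')) = ThetaB d c Vj x s' := by
  set s'' := Function.update s' v'' (wm v'') with hs''
  -- pointwise: s'' ≤ s'
  have hle : ∀ v, s'' v ≤ s' v := by
    intro v
    by_cases h : v = v''
    · subst h; simp [hs'', hlow]
    · simp [hs'', Function.update_of_ne h]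
  -- Wgt decreases pointwise
  have hWle : ∀ v', Wgt d Vj x v' s'' ≤ Wgt d Vj x v' s' := by
    intro v'
    exact Finset.sum_le_sum (fun v _ => hle v)
  -- Wgt unchanged for far vertices
  have hWeq : ∀ v', d v'' x < d v' x → Wgt d Vj x v' s'' = Wgt d Vj x v' s' := by
    intro v' hfar
    apply Finset.sum_congr rfl
    intro v hv
    rw [Finset.mem_filter] at hv
    have hne : v ≠ v'' := by
      intro h; subst h
      exact absurd hv.2 (not_le.mpr hfar)
    simp [hs'', Function.update_of_ne hne]
  have hWvb : Wgt d Vj x vb s'' = Wgt d Vj x vb s' := hWeq vb hclose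
  -- nonnegativity of ThetaB s'
  have hTh0 : (0:ℝ) ≤ ThetaB d c Vj x s' := by
    unfold ThetaB
    exact (Finset.le_fold_max _).mpr (Or.inl le_rfl)
  apply le_antisymm
  · -- ThetaB s'' ≤ ThetaB s'
    unfold ThetaB
    rw [Finset.fold_max_le]
    refine ⟨hTh0, fun v' hv' => ?_⟩
    rw [Finset.mem_filter] at hv'
    have hWpos' : 0 < Wgt d Vj x v' s' := lt_of_lt_of_le hv'.2 (hWle v')
    have hterm : d v' x + Wgt d Vj x v' s'' / c ≤ d v' x + Wgt d Vj x v' s' / c := by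
      gcongr
      exact hWle v'
    refine le_trans hterm ?_
    exact (Finset.le_fold_max _).mpr (Or.inr ⟨v', Finset.mem_filter.mpr ⟨hv'.1, hWpos'⟩, le_rfl⟩)
  · -- ThetaB s' ≤ ThetaB s''
    rw [hmax, ← hWvb]
    unfold ThetaB
    exact (Finset.le_fold_max _).mpr
      (Or.inr ⟨vb, Finset.mem_filter.mpr ⟨hvb, hWvb ▸ hWpos⟩, le_rfl⟩)
end
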